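/- arXiv:1104.0003 — 8 statements merged into one kernel-verified Lean document; each statement's English description precedes it below -/
import Mathlib

section
/- If v and w are twin vertices of a graph G of order at least 4, then {v,w} is an isolable set: the U-switching of G, where U is the set of vertices adjacent to both v and w, contains no edges between {v,w} and the remaining vertices. -/
/-- The `U`-switching of a graph: toggle exactly the edges between `U` and its complement. -/
def SimpleGraph.switch {V : Type*} (G : SimpleGraph V) (U : Set V) : SimpleGraph V where
  Adj a b := a ≠ b ∧ (G.Adj a b ↔ ((a ∈ U) ↔ (b ∈ U)))
  symm := ⟨fun a b => by
    rintro ⟨h, h2⟩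
    refine ⟨h.symm, ?_⟩
    rw [G.adj_comm]; tauto⟩
  loopless := ⟨fun a => by simp⟩

/-- The complete bipartite graph with parts `U` and `Uᶜ` on vertex set `V`. -/
def completeBipartite {V : Type*} (U : Set V) : SimpleGraph V where
  Adj a b := (a ∈ U ∧ b ∉ U) ∨ (b ∈ U ∧ a ∉ U)
  symm := ⟨fun a b => by tauto⟩
  loopless := ⟨fun a => by tauto⟩

/-- `W` is isolable in `G` if `2 ≤ |W|`, `2 ≤ |Wᶜ|`, and some switching of `G`
has no edges between `W` and `Wᶜ`. -/
def SimpleGraph.Isolable {V : Type*} (G : SimpleGraph V) (W : Set V) : Prop :=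
  2 ≤ W.ncard ∧ 2 ≤ Wᶜ.ncard ∧
    ∃ U : Set V, ∀ a ∈ W, ∀ b ∈ Wᶜ, ¬ (G.switch U).Adj a b

def SimpleGraph.SwitchingSeparable {V : Type*} (G : SimpleGraph V) : Prop :=
  ∃ W : Set V, G.Isolable W

/-- The number of edges of `G` among the pairs {a,c}, {a,d}, {b,c}, {b,d}. -/
noncomputable def SimpleGraph.N {V : Type*} (G : SimpleGraph V) (a b c d : V) : ℕ := by
  classical
  exact (if G.Adj a c then 1 else 0) + (if G.Adj a d then 1 else 0) +
    (if G.Adj b c then 1 else 0) + (if G.Adj b d then 1 else 0)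

/-- The circulant graph on `ZMod n` with connection set `{±1, …, ±⌊n/4⌋}`. -/
def circulant (n : ℕ) : SimpleGraph (ZMod n) :=
  SimpleGraph.fromRel (fun a b => ∃ j : ℕ, 1 ≤ j ∧ j ≤ n / 4 ∧ b = a + (j : ZMod n))

/-- Evaluation of a multilinear polynomial over GF(2), given by its coefficient function. -/
def mleval {k : ℕ} (c : Finset (Fin k) → ZMod 2) (x : Fin k → ZMod 2) : ZMod 2 :=
  ∑ s : Finset (Fin k), c s * ∏ i ∈ s, x i

/-- The multilinear polynomial `c` has degree at most `d`. -/
def mldegLE {k : ℕ} (c : Finset (Fin k) → ZMod 2) (d : ℕ) : Prop :=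
  ∀ s : Finset (Fin k), c s ≠ 0 → s.card ≤ d

/-- The graph of a quadratic polynomial: `i ~ j` iff the monomial `x i * x j` occurs. -/
def graphOf {k : ℕ} (c : Finset (Fin k) → ZMod 2) : SimpleGraph (Fin k) where
  Adj i j := i ≠ j ∧ c {i, j} ≠ 0
  symm := ⟨fun i j => by
    rintro ⟨h, h2⟩
    exact ⟨h.symm, by rwa [Finset.pair_comm]⟩⟩
  loopless := ⟨fun i => by simp⟩

/-- The polynomial `c` represents the extended Boolean function `f`
(i.e. they agree on all tuples with an even number of ones). -/
def Represents {k : ℕ} (c : Finset (Fin k) → ZMod 2) (f : (Fin k → ZMod 2) → ZMod 2) : Prop :=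
  ∀ x : Fin k → ZMod 2, (∑ i, x i) = 0 → mleval c x = f x

/-- An extended Boolean function in `k` arguments is separable if on its domain it is the
sum of two Boolean functions depending on disjoint argument sets of at most `k - 2` variables. -/
def EbfSeparable {k : ℕ} (f : (Fin k → ZMod 2) → ZMod 2) : Prop :=
  ∃ A B : Finset (Fin k), Disjoint A B ∧ A.card ≤ k - 2 ∧ B.card ≤ k - 2 ∧
    ∃ g h : (Fin k → ZMod 2) → ZMod 2,
      (∀ x y : Fin k → ZMod 2, (∀ i ∈ A, x i = y i) → g x = g y) ∧
      (∀ x y : Fin k → ZMod 2, (∀ i ∈ B, x i = y i) → h x = h y) ∧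
      ∀ x : Fin k → ZMod 2, (∑ i, x i) = 0 → f x = g x + h x

/-! For `b ∉ {v, w}`, twinness makes `b` a common neighbour of `v` and `w` exactly when it is
adjacent to `v` (equivalently to `w`). Switching at the common neighbourhood therefore deletes
every edge between `{v, w}` and the other vertices and creates none. -/

namespace SimpleGraph

variable {V : Type*} (G : SimpleGraph V)

def AreTwins (v w : V) : Prop :=
  ∀ x : V, x ≠ v → x ≠ w → (G.Adj x v ↔ G.Adj x w)

variable {G}

theorem AreTwins.symm {v w : V} (h : G.AreTwins v w) : G.AreTwins w v :=
  fun x hxw hxv => (h x hxv hxw).symm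

theorem AreTwins.mem_commonNeighbors_iff {v w b : V} (h : G.AreTwins v w) (hbv : b ≠ v)
    (hbw : b ≠ w) : b ∈ G.commonNeighbors v w ↔ G.Adj v b := by
  rw [mem_commonNeighbors, G.adj_comm w, ← h b hbv hbw, G.adj_comm b, and_self]

theorem not_switch_adj_of_mem_iff_adj {U : Set V} {a b : V} (ha : a ∉ U)
    (hb : b ∈ U ↔ G.Adj a b) : ¬ (G.switch U).Adj a b := by
  rintro ⟨-, h⟩
  simp only [ha, false_iff] at h
  tauto

theorem AreTwins.not_switch_commonNeighbors_adj {v w b : V} (h : G.AreTwins v w) (hbv : b ≠ v)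
    (hbw : b ≠ w) : ¬ (G.switch (G.commonNeighbors v w)).Adj v b :=
  not_switch_adj_of_mem_iff_adj (G.notMem_commonNeighbors_left v w)
    (h.mem_commonNeighbors_iff hbv hbw)

theorem AreTwins.forall_not_switch_commonNeighbors_adj {v w : V} (h : G.AreTwins v w) :
    ∀ a ∈ ({v, w} : Set V), ∀ b ∉ ({v, w} : Set V),
      ¬ (G.switch (G.commonNeighbors v w)).Adj a b := by
  intro a ha b hb
  simp only [Set.mem_insert_iff, Set.mem_singleton_iff, not_or] at ha hb
  rcases ha with rfl | rfl
  · exact h.not_switch_commonNeighbors_adj hb.1 hb.2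
  · rw [commonNeighbors_symm]
    exact h.symm.not_switch_commonNeighbors_adj hb.2 hb.1

theorem isolable_pair_of_forall_not_switch_adj [Finite V] {v w : V} (hcard : 4 ≤ Nat.card V) (hvw : v ≠ w) (U : Set V)
    (hU : ∀ a ∈ ({v, w} : Set V), ∀ b ∉ ({v, w} : Set V), ¬ (G.switch U).Adj a b) :
    G.Isolable {v, w} := by
  refine ⟨(Set.ncard_pair hvw).ge, ?_, U, hU⟩
  rw [Set.ncard_compl, Set.ncard_pair hvw]
  omega

end SimpleGraph

theorem twin_isolable {V : Type*} [Fintype V] (G : SimpleGraph V)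
    (h4 : 4 ≤ Fintype.card V) (v w : V) (hvw : v ≠ w)
    (htwin : ∀ x : V, x ≠ v → x ≠ w → (G.Adj x v ↔ G.Adj x w)) :
    (∀ a ∈ ({v, w} : Set V), ∀ b ∉ ({v, w} : Set V),
        ¬ (G.switch {x | G.Adj x v ∧ G.Adj x w}).Adj a b) ∧
      G.Isolable {v, w} := by
  have hU : {x | G.Adj x v ∧ G.Adj x w} = G.commonNeighbors v w := by
    ext x
    simp only [Set.mem_ofPred_eq, SimpleGraph.mem_commonNeighbors, G.adj_comm x]
  have htwin : G.AreTwins v w := htwin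
  have hsep := htwin.forall_not_switch_commonNeighbors_adj
  rw [hU]
  exact ⟨hsep, G.isolable_pair_of_forall_not_switch_adj (by rwa [Nat.card_eq_fintype_card]) hvw _ hsep⟩
end

section
/- For every odd n ≥ 5, there exists a graph of order n that is not switching separable but such that deleting any single vertex yields a switching separable graph of order n−1. -/
/-!
The example is `circulant n`: with `m = n / 4`, two vertices of `ZMod n` are adjacent iff their
circular distance is between `1` and `m`.

If switching isolates `W`, the edges between `W` and `Wᶜ` are exactly the pairs on which some
labelling `E` agrees. Look at consecutive vertices `x, x + 1`. On opposite sides they are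
adjacent, so their labels agree. On the same side with different labels, every vertex of the
other side tells them apart, which forces the other side to be `{x - m, x + m + 1}`; the vertex
antipodal to the edge `{x, x + 1}` is adjacent to both or to neither of these two points, which
is again impossible. So `E` is constant and every pair across the cut is an edge, but the vertex
antipodal to an edge of the cycle leaving `W` is adjacent to neither end.

After deleting `v`, the vertices `v ± (n + 1) / 4` have complementary neighbourhoods among the
remaining vertices, and a pair with complementary neighbourhoods can always be switched off.
-/

namespace ZMod

variable {n : ℕ} [NeZero n]

theorem val_intCast_eq_or {e : ℤ} (hlo : -n < e) (hhi : e < n) :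
    ((e : ZMod n).val : ℤ) = e ∨ ((e : ZMod n).val : ℤ) = e + n := by
  rw [val_intCast]
  rcases le_or_gt 0 e with he | he
  · exact .inl (Int.emod_eq_of_lt he hhi)
  · exact .inr (by rw [Int.emod_eq_add_self_emod]; exact Int.emod_eq_of_lt (by omega) (by omega))

theorem add_intCast_ne_add_intCast (x : ZMod n) {i j : ℤ} (hij : i ≠ j) (hlo : -n < j - i)
    (hhi : j - i < n) : x + i ≠ x + j := by
  intro h
  have h0 : (((j - i : ℤ) : ZMod n)).val = 0 := by
    rw [ZMod.val_eq_zero]; push_cast; exact sub_eq_zero.2 (add_left_cancel h).symm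
  rcases val_intCast_eq_or hlo hhi with h' | h' <;> omega

theorem exists_eq_add_intCast (x b : ZMod n) (lo : ℤ) :
    ∃ t : ℤ, lo ≤ t ∧ t < lo + n ∧ b = x + t := by
  refine ⟨lo + (b - x - lo).val, by omega, by have := (b - x - lo).val_lt; omega, ?_⟩
  push_cast
  rw [natCast_zmod_val]
  ring

theorem mem_of_forall_add_one_mem {s : Set (ZMod n)} (hs : ∀ x ∈ s, x + 1 ∈ s) {a : ZMod n}
    (ha : a ∈ s) (b : ZMod n) : b ∈ s := by
  have key : ∀ k : ℕ, a + k ∈ s := by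
    intro k
    induction k with
    | zero => simpa using ha
    | succ k ih => simpa [add_assoc] using hs _ ih
  simpa using key (b - a).val

end ZMod

namespace SimpleGraph

variable {V : Type*} (G : SimpleGraph V)

def CutAdjIff (W E : Set V) : Prop :=
  ∀ a ∈ W, ∀ b ∉ W, G.Adj a b ↔ (a ∈ E ↔ b ∈ E)

variable {G}

theorem CutAdjIff.compl {W E : Set V} (h : G.CutAdjIff W E) : G.CutAdjIff Wᶜ E := by
  intro a ha b hb
  rw [G.adj_comm, h b (not_not.1 hb) a ha]
  exact iff_comm

theorem cutAdjIff_of_forall_not_switch_adj {W U : Set V}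
    (h : ∀ a ∈ W, ∀ b ∈ Wᶜ, ¬(G.switch U).Adj a b) :
    G.CutAdjIff W {v | v ∈ W ↔ v ∈ U} := by
  intro a ha b hb
  have hab : a ≠ b := fun hab => hb (hab ▸ ha)
  have := h a ha b hb
  simp only [switch, Set.mem_ofPred_eq] at this ⊢
  tauto

theorem isolable_pair_of_adj_iff_not_adj [Finite V] {p q : V} (hpq : p ≠ q)
    (hV : 4 ≤ Nat.card V) (h : ∀ w, w ≠ p → w ≠ q → (G.Adj p w ↔ ¬G.Adj q w)) :
    G.Isolable {p, q} := by
  refine ⟨(Set.ncard_pair hpq).ge, ?_, insert q {w | G.Adj p w}, ?_⟩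
  · have := Set.ncard_add_ncard_compl {p, q}
    rw [Set.ncard_pair hpq] at this
    omega
  · rintro a ha b hb ⟨-, hadj⟩
    simp only [Set.mem_compl_iff, Set.mem_insert_iff, Set.mem_singleton_iff, not_or] at ha hb
    have := h b hb.1 hb.2
    simp only [Set.mem_insert_iff, Set.mem_ofPred_eq, hb.2, false_or] at hadj
    rcases ha with rfl | rfl
    · simp only [hpq, G.irrefl, or_self] at hadj
      tauto
    · simp only [true_or] at hadj
      tauto

end SimpleGraph

section Circulant

variable {n : ℕ} [NeZero n]

theorem circulant_adj_iff_val (a b : ZMod n) :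
    (circulant n).Adj a b ↔
      (1 ≤ (b - a).val ∧ (b - a).val ≤ n / 4) ∨ (1 ≤ (a - b).val ∧ (a - b).val ≤ n / 4) := by
  have hn := NeZero.pos n
  have shift : ∀ a b : ZMod n, (∃ j : ℕ, 1 ≤ j ∧ j ≤ n / 4 ∧ b = a + j) ↔
      1 ≤ (b - a).val ∧ (b - a).val ≤ n / 4 := by
    intro a b
    constructor
    · rintro ⟨j, h1, h2, rfl⟩
      rw [add_sub_cancel_left, ZMod.val_natCast_of_lt (by omega)]
      exact ⟨h1, h2⟩
    · rintro ⟨h1, h2⟩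
      exact ⟨_, h1, h2, by rw [ZMod.natCast_zmod_val]; ring⟩
  rw [circulant, SimpleGraph.fromRel_adj, shift, shift]
  refine ⟨And.right, fun h => ⟨?_, h⟩⟩
  rintro rfl
  simp at h

theorem circulant_adj_add_intCast (a : ZMod n) {d : ℤ} (hlo : -n < d) (hhi : d < n) :
    (circulant n).Adj a (a + d) ↔ (0 < d ∧ d ≤ (n / 4 : ℕ)) ∨ (0 < -d ∧ -d ≤ (n / 4 : ℕ)) ∨
      n - (n / 4 : ℕ) ≤ d ∨ n - (n / 4 : ℕ) ≤ -d := by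
  rw [circulant_adj_iff_val, add_sub_cancel_left,
    show a - (a + d) = ((-d : ℤ) : ZMod n) by push_cast; ring]
  have h₁ := ZMod.val_intCast_eq_or (n := n) hlo hhi
  have h₂ := ZMod.val_intCast_eq_or (n := n) (e := -d) (by omega) (by omega)
  have := (d : ZMod n).val_lt
  have := ((-d : ℤ) : ZMod n).val_lt
  omega

theorem circulant_adj_iff_of_eq_add {x a b : ZMod n} {i j : ℤ} (ha : a = x + i) (hb : b = x + j)
    (hlo : -n < j - i) (hhi : j - i < n) :
    (circulant n).Adj a b ↔ (0 < j - i ∧ j - i ≤ (n / 4 : ℕ)) ∨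
      (0 < -(j - i) ∧ -(j - i) ≤ (n / 4 : ℕ)) ∨ n - (n / 4 : ℕ) ≤ j - i ∨
      n - (n / 4 : ℕ) ≤ -(j - i) := by
  rw [← circulant_adj_add_intCast a hlo hhi, ha, hb]
  push_cast
  ring_nf

theorem circulant_eq_of_adj_iff_not_adj_add_one (h4 : 4 ≤ n) {x b : ZMod n}
    (h : (circulant n).Adj x b ↔ ¬(circulant n).Adj (x + 1) b) :
    b = x - (n / 4 : ℕ) ∨ b = x ∨ b = x + 1 ∨ b = x + (n / 4 + 1 : ℕ) := by
  obtain ⟨t, htlo, hthi, rfl⟩ := ZMod.exists_eq_add_intCast x b (-(n / 4 : ℕ))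
  rw [circulant_adj_iff_of_eq_add (i := 0) (by simp) rfl (by omega) (by omega),
    circulant_adj_iff_of_eq_add (i := 1) (by simp) rfl (by omega) (by omega)] at h
  generalize hm : n / 4 = m at h htlo hthi ⊢
  have ht : t = -m ∨ t = 0 ∨ t = 1 ∨ t = (m + 1 : ℕ) := by omega
  rcases ht with rfl | rfl | rfl | rfl <;> simp [sub_eq_add_neg]

theorem circulant_not_adj_add_half (h5 : 5 ≤ n) (x : ZMod n) :
    ¬(circulant n).Adj x (x + ((n + 1) / 2 : ℕ)) ∧
      ¬(circulant n).Adj (x + 1) (x + ((n + 1) / 2 : ℕ)) := by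
  generalize hh : (n + 1) / 2 = h
  rw [circulant_adj_iff_of_eq_add (x := x) (i := 0) (j := h) (by simp) (by simp)
      (by omega) (by omega),
    circulant_adj_iff_of_eq_add (x := x) (i := 1) (j := h) (by simp) (by simp)
      (by omega) (by omega)]
  omega

theorem circulant_exists_not_adj_cut (h5 : 5 ≤ n) {W : Set (ZMod n)} {a b : ZMod n}
    (ha : a ∈ W) (hb : b ∉ W) : ∃ a' ∈ W, ∃ b' ∉ W, ¬(circulant n).Adj a' b' := by
  obtain ⟨x, hx, hx1⟩ : ∃ x ∈ W, x + 1 ∉ W := by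
    by_contra! h
    exact hb (ZMod.mem_of_forall_add_one_mem h ha b)
  obtain ⟨hxz, hx1z⟩ := circulant_not_adj_add_half h5 x
  by_cases hz : x + ((n + 1) / 2 : ℕ) ∈ W
  · exact ⟨_, hz, _, hx1, fun h => hx1z h.symm⟩
  · exact ⟨_, hx, _, hz, hxz⟩

theorem circulant_cutAdjIff_mem_iff_add_one_mem_of_mem (hn : Odd n) (h5 : 5 ≤ n)
    {W E : Set (ZMod n)} (hE : (circulant n).CutAdjIff W E) {x b₁ b₂ : ZMod n} (hx : x ∈ W)
    (hx1 : x + 1 ∈ W) (hb₁ : b₁ ∉ W) (hb₂ : b₂ ∉ W) (hb : b₁ ≠ b₂) : x ∈ E ↔ x + 1 ∈ E := by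
  by_contra hlabel
  have hout : ∀ b ∉ W, b = x - (n / 4 : ℕ) ∨ b = x + (n / 4 + 1 : ℕ) := by
    intro b hb
    have := hE x hx b hb
    have := hE (x + 1) hx1 b hb
    rcases circulant_eq_of_adj_iff_not_adj_add_one (by omega) (x := x) (b := b) (by tauto)
      with h | rfl | rfl | h
    exacts [.inl h, absurd hx hb, absurd hx1 hb, .inr h]
  obtain ⟨hxz, hx1z⟩ := circulant_not_adj_add_half h5 x
  have := Nat.odd_iff.1 hn
  generalize hm : n / 4 = m at hout
  generalize hh : (n + 1) / 2 = h at hxz hx1z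
  have hxc : (circulant n).Adj x (x - m) := by
    rw [circulant_adj_iff_of_eq_add (x := x) (i := 0) (j := -m) (by simp)
      (by simp [sub_eq_add_neg]) (by omega) (by omega)]
    omega
  have hxd : ¬(circulant n).Adj x (x + (m + 1 : ℕ)) := by
    rw [circulant_adj_iff_of_eq_add (x := x) (i := 0) (j := (m + 1 : ℕ)) (by simp) (by simp)
      (by omega) (by omega)]
    omega
  have hx1d : (circulant n).Adj (x + 1) (x + (m + 1 : ℕ)) := by
    rw [circulant_adj_iff_of_eq_add (x := x) (i := 1) (j := (m + 1 : ℕ)) (by simp) (by simp)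
      (by omega) (by omega)]
    omega
  -- `x + h` is antipodal to the midpoint of `x` and `x + 1`; the reflection through that
  -- midpoint fixes it and swaps `x - m` with `x + (m + 1)`.
  have hzcd : (circulant n).Adj (x + h) (x - m) ↔
      (circulant n).Adj (x + h) (x + (m + 1 : ℕ)) := by
    rw [circulant_adj_iff_of_eq_add (x := x) (i := h) (j := -m) (by simp)
        (by simp [sub_eq_add_neg]) (by omega) (by omega),
      circulant_adj_iff_of_eq_add (x := x) (i := h) (j := (m + 1 : ℕ)) (by simp) (by simp)
        (by omega) (by omega)]
    omega
  have hcd : x - m ∉ W ∧ x + (m + 1 : ℕ) ∉ W := by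
    rcases hout b₁ hb₁ with rfl | rfl <;> rcases hout b₂ hb₂ with rfl | rfl <;>
      first | exact absurd rfl hb | exact ⟨hb₁, hb₂⟩ | exact ⟨hb₂, hb₁⟩
  have hz : x + (h : ZMod n) ∈ W := by
    by_contra hz
    rcases hout _ hz with h | h
    exacts [hxz (h ▸ hxc), hx1z (h ▸ hx1d)]
  have hc := (hE x hx _ hcd.1).1 hxc
  have hd := mt (hE x hx _ hcd.2).2 hxd
  rw [hE _ hz _ hcd.1, hE _ hz _ hcd.2] at hzcd
  clear hE hout
  tauto

theorem circulant_cutAdjIff_mem_iff_add_one_mem (hn : Odd n) (h5 : 5 ≤ n)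
    {W E : Set (ZMod n)} (hE : (circulant n).CutAdjIff W E) {a₁ a₂ b₁ b₂ : ZMod n}
    (ha₁ : a₁ ∈ W) (ha₂ : a₂ ∈ W) (ha : a₁ ≠ a₂) (hb₁ : b₁ ∉ W) (hb₂ : b₂ ∉ W) (hb : b₁ ≠ b₂)
    (x : ZMod n) : x ∈ E ↔ x + 1 ∈ E := by
  have hadj : (circulant n).Adj x (x + 1) := by
    rw [circulant_adj_iff_of_eq_add (x := x) (i := 0) (j := 1) (by simp) (by simp)
      (by omega) (by omega)]
    omega
  by_cases hx : x ∈ W <;> by_cases hx1 : x + 1 ∈ W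
  · exact circulant_cutAdjIff_mem_iff_add_one_mem_of_mem hn h5 hE hx hx1 hb₁ hb₂ hb
  · exact (hE x hx _ hx1).1 hadj
  · exact ((hE _ hx1 x hx).1 hadj.symm).symm
  · exact circulant_cutAdjIff_mem_iff_add_one_mem_of_mem hn h5 hE.compl hx hx1
      (not_not.2 ha₁) (not_not.2 ha₂) ha

theorem circulant_not_switchingSeparable (hn : Odd n) (h5 : 5 ≤ n) :
    ¬(circulant n).SwitchingSeparable := by
  rintro ⟨W, hW, hWc, U, hU⟩
  obtain ⟨a₁, a₂, ha₁, ha₂, ha⟩ := (Set.one_lt_ncard_iff).1 hW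
  obtain ⟨b₁, b₂, hb₁, hb₂, hb⟩ := (Set.one_lt_ncard_iff).1 hWc
  have hE := SimpleGraph.cutAdjIff_of_forall_not_switch_adj hU
  have hstep := circulant_cutAdjIff_mem_iff_add_one_mem hn h5 hE ha₁ ha₂ ha hb₁ hb₂ hb
  have hconst : ∀ a b, a ∈ {v | v ∈ W ↔ v ∈ U} → b ∈ {v | v ∈ W ↔ v ∈ U} :=
    fun a b h => ZMod.mem_of_forall_add_one_mem (fun x => (hstep x).1) h b
  obtain ⟨a, ha, b, hb, hab⟩ := circulant_exists_not_adj_cut h5 ha₁ hb₁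
  exact hab ((hE a ha b hb).2 ⟨hconst a b, hconst b a⟩)

theorem circulant_adj_add_iff_not_adj_sub (hn : Odd n) (h5 : 5 ≤ n) {v w : ZMod n}
    (hv : w ≠ v) (hp : w ≠ v + ((n + 1) / 4 : ℕ)) (hq : w ≠ v - ((n + 1) / 4 : ℕ)) :
    (circulant n).Adj (v + ((n + 1) / 4 : ℕ)) w ↔
      ¬(circulant n).Adj (v - ((n + 1) / 4 : ℕ)) w := by
  have := Nat.odd_iff.1 hn
  generalize ha : (n + 1) / 4 = a at hp hq ⊢
  obtain ⟨t, htlo, hthi, rfl⟩ := ZMod.exists_eq_add_intCast v w (-(n / 2 : ℕ))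
  have ht0 : t ≠ 0 := by rintro rfl; simp at hv
  have htp : t ≠ a := by rintro rfl; simp at hp
  have htq : t ≠ -a := by rintro rfl; simp [sub_eq_add_neg] at hq
  rw [circulant_adj_iff_of_eq_add (i := a) (by simp) rfl (by omega) (by omega),
    circulant_adj_iff_of_eq_add (i := -a) (by simp [sub_eq_add_neg]) rfl (by omega) (by omega)]
  omega

theorem circulant_induce_switchingSeparable (hn : Odd n) (h5 : 5 ≤ n) (v : ZMod n) :
    ((circulant n).induce {w | w ≠ v}).SwitchingSeparable := by
  have := Nat.odd_iff.1 hn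
  set a := (n + 1) / 4
  have hp : v + a ≠ v := by
    simpa using
      ZMod.add_intCast_ne_add_intCast v (i := a) (j := 0) (by omega) (by omega) (by omega)
  have hq : v - a ≠ v := by
    simpa [sub_eq_add_neg] using
      ZMod.add_intCast_ne_add_intCast v (i := -a) (j := 0) (by omega) (by omega) (by omega)
  have hpq : v + a ≠ v - a := by
    simpa [sub_eq_add_neg] using
      ZMod.add_intCast_ne_add_intCast v (i := a) (j := -a) (by omega) (by omega) (by omega)
  refine ⟨_, SimpleGraph.isolable_pair_of_adj_iff_not_adj (p := ⟨v + a, hp⟩) (q := ⟨v - a, hq⟩)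
    (by simpa using hpq) ?_ ?_⟩
  · have := Set.ncard_add_ncard_compl {v}
    rw [Set.ncard_singleton, Nat.card_zmod] at this
    rw [Nat.card_coe_set_eq]
    exact (show {w | w ≠ v} = {v}ᶜ from rfl) ▸ (by omega)
  · rintro ⟨w, hw⟩ hwp hwq
    exact circulant_adj_add_iff_not_adj_sub hn h5 hw (by simpa using hwp) (by simpa using hwq)

end Circulant

theorem exists_nonseparable_with_separable_subgraphs (n : ℕ) (hodd : Odd n) (h5 : 5 ≤ n) :
    ∃ G : SimpleGraph (Fin n), ¬ G.SwitchingSeparable ∧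
      ∀ v : Fin n, (G.induce {w | w ≠ v}).SwitchingSeparable := by
  obtain ⟨k, rfl⟩ : ∃ k, n = k + 1 := ⟨n - 1, by omega⟩
  -- `ZMod (k + 1)` is `Fin (k + 1)` by definition.
  exact ⟨circulant (k + 1), circulant_not_switchingSeparable hodd h5,
    circulant_induce_switchingSeparable hodd h5⟩
end

section
/- For odd n ≥ 5, the circulant graph G_n on vertex set Z_n with connection set {±1, ±2, …, ±⌊n/4⌋} is not switching separable. -/
namespace SimpleGraph

variable {V : Type*} {G : SimpleGraph V} {W U : Set V}

theorem adj_iff_adj_iff_of_switch_isolates (hU : ∀ a ∈ W, ∀ b ∈ Wᶜ, ¬(G.switch U).Adj a b)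
    {a b c d : V} (ha : a ∈ W) (hb : b ∈ W) (hc : c ∉ W) (hd : d ∉ W) :
    (G.Adj a c ↔ G.Adj a d) ↔ (G.Adj b c ↔ G.Adj b d) := by
  have toggled : ∀ {x y}, x ∈ W → y ∉ W → (G.Adj x y ↔ ¬(x ∈ U ↔ y ∈ U)) := fun hx hy =>
    (not_iff.1 fun h => hU _ hx _ hy ⟨fun hxy => hy (hxy ▸ hx), h⟩).not_right
  rw [toggled ha hc, toggled ha hd, toggled hb hc, toggled hb hd]
  tauto

end SimpleGraph

theorem ZMod.exists_mem_add_one_notMem {n : ℕ} [NeZero n] {W : Set (ZMod n)}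
    (hW : W.Nonempty) (hWc : Wᶜ.Nonempty) : ∃ x ∈ W, x + 1 ∉ W := by
  by_contra! hclosed
  obtain ⟨x, hx⟩ := hW
  obtain ⟨y, hy⟩ := hWc
  have hmem : ∀ k : ℕ, x + k ∈ W := by
    intro k
    induction k with
    | zero => simpa using hx
    | succ k ih => simpa [add_assoc] using hclosed _ ih
  apply hy
  simpa using hmem (y - x).val

theorem ZMod.natCast_sub_natCast_eq_of_add {n a b c : ℕ} (h : c + b = a ∨ c + b = a + n) :
    (a : ZMod n) - b = c := by
  rw [sub_eq_iff_eq_add]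
  rcases h with h | h
  · rw [← h, Nat.cast_add]
  · rw [← add_zero (a : ZMod n), ← ZMod.natCast_self n, ← Nat.cast_add, ← h, Nat.cast_add]

theorem ZMod.natCast_self_add_one_sub {n k : ℕ} (hk : k ≤ n + 1) :
    ((n + 1 - k : ℕ) : ZMod n) = 1 - k := by
  rw [Nat.cast_sub hk, Nat.cast_add, ZMod.natCast_self, zero_add, Nat.cast_one]

namespace circulant

variable {n : ℕ} {S : Set (ZMod n)}

/-- Membership in the connection set `{±1, …, ±⌊n/4⌋}`, read off the representative in `[0, n)`. -/
def IsShift (z : ZMod n) : Prop :=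
  1 ≤ z.val ∧ (z.val ≤ n / 4 ∨ n ≤ z.val + n / 4)

theorem isShift_natCast [NeZero n] {k : ℕ} (hk : k < n) :
    IsShift (k : ZMod n) ↔ 1 ≤ k ∧ (k ≤ n / 4 ∨ n ≤ k + n / 4) := by
  rw [IsShift, ZMod.val_cast_of_lt hk]

theorem isShift_neg [NeZero n] (z : ZMod n) : IsShift (-z) ↔ IsShift z := by
  rcases eq_or_ne z 0 with rfl | hz
  · rw [neg_zero]
  · have hpos := (ZMod.val_ne_zero z).2 hz
    have hlt := ZMod.val_lt z
    rw [IsShift, IsShift, ZMod.neg_val, if_neg hz]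
    omega

theorem adj_iff [NeZero n] {a b : ZMod n} : (circulant n).Adj a b ↔ IsShift (b - a) := by
  have hquarter : n / 4 < n := Nat.div_lt_self (Nat.pos_of_neZero n) (by norm_num)
  rw [circulant, SimpleGraph.fromRel_adj]
  constructor
  · rintro ⟨-, ⟨j, hj1, hjm, rfl⟩ | ⟨j, hj1, hjm, rfl⟩⟩
    · rw [add_sub_cancel_left, isShift_natCast (by omega)]
      omega
    · rw [sub_add_cancel_left, isShift_neg, isShift_natCast (by omega)]
      omega
  · rintro ⟨hpos, hsmall | hlarge⟩
    · refine ⟨fun hab => by simp [hab] at hpos, Or.inl ⟨_, hpos, hsmall, ?_⟩⟩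
      rw [ZMod.natCast_zmod_val, add_sub_cancel]
    · have hlt := ZMod.val_lt (b - a)
      refine ⟨fun hab => by simp [hab] at hpos, Or.inr ⟨n - (b - a).val, by omega, by omega, ?_⟩⟩
      rw [Nat.cast_sub hlt.le, ZMod.natCast_self, ZMod.natCast_zmod_val]
      ring

/-- The four-vertex parity condition for the vertices `0, b ∈ S` and `1, d ∉ S`. -/
def IsSwitchCut (S : Set (ZMod n)) : Prop :=
  ∀ b ∈ S, ∀ d ∉ S, IsShift (d - b) ↔ (IsShift (b - 1) ↔ IsShift d)

theorem isSwitchCut_of_switch_isolates (h5 : 5 ≤ n) {W U : Set (ZMod n)}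
    (hU : ∀ a ∈ W, ∀ b ∈ Wᶜ, ¬((circulant n).switch U).Adj a b) {x : ZMod n}
    (hx : x ∈ W) (hx1 : x + 1 ∉ W) : IsSwitchCut {z | x + z ∈ W} := by
  have : NeZero n := ⟨by omega⟩
  intro b hb d hd
  have h := SimpleGraph.adj_iff_adj_iff_of_switch_isolates hU hx hb hx1 hd
  have hone : IsShift (1 : ZMod n) := by
    rw [← Nat.cast_one, isShift_natCast (by omega)]
    omega
  rw [adj_iff, adj_iff, adj_iff, adj_iff, add_sub_cancel_left, add_sub_cancel_left,
    add_sub_add_left_eq_sub, add_sub_add_left_eq_sub, ← neg_sub, isShift_neg] at h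
  tauto

def reflect (S : Set (ZMod n)) : Set (ZMod n) := {z | 1 - z ∉ S}

theorem mem_reflect {z : ZMod n} : z ∈ reflect S ↔ 1 - z ∉ S := Iff.rfl

theorem reflect_reflect (S : Set (ZMod n)) : reflect (reflect S) = S := by
  ext z
  simp [mem_reflect]

theorem isSwitchCut_reflect [NeZero n] (H : IsSwitchCut S) : IsSwitchCut (reflect S) := by
  intro b hb d hd
  rw [mem_reflect] at hb
  rw [mem_reflect, not_not] at hd
  have h := H _ hd _ hb
  rw [sub_sub_sub_cancel_left, sub_sub_cancel_left, isShift_neg, ← neg_sub b 1, isShift_neg] at h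
  tauto

def MissesShift (S : Set (ZMod n)) : Prop :=
  ∃ d ∉ S, d ≠ 1 ∧ IsShift d

theorem missesShift_iff (h2 : 2 ≤ n) : MissesShift S ↔
    ∃ d < n, 2 ≤ d ∧ (d ≤ n / 4 ∨ n ≤ d + n / 4) ∧ (d : ZMod n) ∉ S := by
  have : NeZero n := ⟨by omega⟩
  have hone : ((1 : ℕ) : ZMod n).val = 1 := ZMod.val_cast_of_lt (by omega)
  constructor
  · rintro ⟨d, hdS, hd1, hpos, hd⟩
    have hval : d.val ≠ 1 := fun h => hd1 (ZMod.val_injective n (by rw [h, ← hone, Nat.cast_one]))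
    exact ⟨d.val, d.val_lt, by omega, hd, by rwa [ZMod.natCast_zmod_val]⟩
  · rintro ⟨d, hdn, hd2, hd, hdS⟩
    refine ⟨d, hdS, fun h => ?_, (isShift_natCast hdn).2 ⟨by omega, hd⟩⟩
    have := congrArg ZMod.val h
    rw [ZMod.val_cast_of_lt hdn, ← Nat.cast_one, hone] at this
    omega

theorem natCast_notMem_of_not_missesShift_reflect (h2 : 2 ≤ n) (hB : ¬MissesShift (reflect S))
    (b : ℕ) (hb : b < n) (hb2 : 2 ≤ b) (hbr : b ≤ n / 4 + 1 ∨ n + 1 ≤ b + n / 4) :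
    (b : ZMod n) ∉ S := by
  intro hbS
  refine hB ((missesShift_iff h2).2 ⟨n + 1 - b, by omega, by omega, by omega, ?_⟩)
  rwa [mem_reflect, not_not, ZMod.natCast_self_add_one_sub (by omega), sub_sub_cancel]

/-- `IsSwitchCut` at `b, d ∈ [0, n)`, where `w` and `q` represent `d - b` and `b - 1`,
as linear arithmetic for `omega`. -/
theorem IsSwitchCut.natCast [NeZero n] (H : IsSwitchCut S) {b d : ℕ} (w q : ℕ)
    (hb : (b : ZMod n) ∈ S) (hd : (d : ZMod n) ∉ S)
    (h : (w + b = d ∨ w + b = d + n) ∧ (q + 1 = b ∨ q + 1 = b + n) ∧ w < n ∧ q < n ∧ d < n) :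
    (1 ≤ w ∧ (w ≤ n / 4 ∨ n ≤ w + n / 4)) ↔
      ((1 ≤ q ∧ (q ≤ n / 4 ∨ n ≤ q + n / 4)) ↔ (1 ≤ d ∧ (d ≤ n / 4 ∨ n ≤ d + n / 4))) := by
  obtain ⟨hw, hq, hwn, hqn, hdn⟩ := h
  have hbq : (b : ZMod n) - 1 = q := by
    rw [← Nat.cast_one]
    exact ZMod.natCast_sub_natCast_eq_of_add hq
  have := H _ hb _ hd
  rwa [ZMod.natCast_sub_natCast_eq_of_add hw, hbq, isShift_natCast hwn, isShift_natCast hqn,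
    isShift_natCast hdn] at this

theorem IsSwitchCut.notMem_of_missesShift (h5 : 5 ≤ n) (H : IsSwitchCut S)
    (hA : MissesShift S) :
    ((n - n / 4 : ℕ) : ZMod n) ∉ S ∧ ((n / 4 + 1 : ℕ) : ZMod n) ∉ S := by
  have : NeZero n := ⟨by omega⟩
  obtain ⟨d, hdn, hd2, hd, hdS⟩ := (missesShift_iff (by omega)).1 hA
  obtain ⟨j, hj1, hjm, hjS⟩ : ∃ j, 1 ≤ j ∧ j ≤ n / 4 ∧ ((n - j : ℕ) : ZMod n) ∉ S := by
    rcases hd with hd | hd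
    · refine ⟨n / 4 - 1, by omega, by omega, fun hmem => ?_⟩
      have := H.natCast (d + n / 4 - 1) (n - n / 4) hmem hdS (by omega)
      omega
    · exact ⟨n - d, by omega, by omega, by rwa [Nat.sub_sub_self hdn.le]⟩
  constructor
  · intro hmem
    by_cases hj : j = n / 4
    · exact hjS (hj ▸ hmem)
    have := H.natCast (n / 4 - j) (n - n / 4 - 1) hmem hjS (by omega)
    omega
  · intro hmem
    have := H.natCast (n - j - n / 4 - 1) (n / 4) hmem hjS (by omega)
    omega

theorem IsSwitchCut.eq_of_natCast_mem (h5 : 5 ≤ n) (H : IsSwitchCut S) (h1 : (1 : ZMod n) ∉ S)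
    (hm : ((n - n / 4 : ℕ) : ZMod n) ∉ S) (hB : ¬MissesShift (reflect S))
    {v : ℕ} (hv : v < n) (hv0 : v ≠ 0) (hvS : (v : ZMod n) ∈ S) : v = 2 * (n / 4) + 1 := by
  have : NeZero n := ⟨by omega⟩
  have hout := natCast_notMem_of_not_missesShift_reflect (by omega) hB
  have hv1 : v ≠ 1 := by
    rintro rfl
    exact h1 (by rwa [Nat.cast_one] at hvS)
  have hvm : v ≠ n - n / 4 := by
    rintro rfl
    exact hm hvS
  have hrange : n / 4 + 2 ≤ v ∧ v + n / 4 + 1 ≤ n := by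
    by_contra
    exact hout v hv (by omega) (by omega) hvS
  -- `m + 1 ∉ S` and `m ∉ S` bound `v` from above and from below.
  have hupper := H.natCast (n + n / 4 + 1 - v) (v - 1) hvS
    (hout (n / 4 + 1) (by omega) (by omega) (by omega)) (by omega)
  by_cases hm2 : 2 ≤ n / 4
  · have hlower := H.natCast (n + n / 4 - v) (v - 1) hvS
      (hout (n / 4) (by omega) (by omega) (by omega)) (by omega)
    omega
  · omega

theorem IsSwitchCut.missesShift_reflect (h5 : 5 ≤ n) (hodd : Odd n) (H : IsSwitchCut S)
    (h1 : (1 : ZMod n) ∉ S) (hm : ((n - n / 4 : ℕ) : ZMod n) ∉ S) (hS : ∃ v ∈ S, v ≠ 0) :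
    MissesShift (reflect S) := by
  have : NeZero n := ⟨by omega⟩
  have hn := Nat.odd_iff.1 hodd
  by_contra hB
  obtain ⟨v, hvS, hv0⟩ := hS
  rw [← ZMod.natCast_zmod_val v] at hvS
  have hv := H.eq_of_natCast_mem h5 h1 hm hB v.val_lt ((ZMod.val_ne_zero v).2 hv0) hvS
  have hnm := H.natCast (n - 3 * (n / 4) - 1) (v.val - 1) hvS hm (by omega)
  have hz : ((n - n / 4 - 1 : ℕ) : ZMod n) ∉ S := fun hz =>
    absurd (H.eq_of_natCast_mem h5 h1 hm hB (by omega) (by omega) hz) (by omega)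
  -- `hnm` rules out `n = 4m + 1`, and `hnm1` rules out `n = 4m + 3`.
  have hnm1 := H.natCast (n - 3 * (n / 4) - 2) (v.val - 1) hvS hz (by omega)
  omega

theorem IsSwitchCut.missesShift_or_missesShift_reflect (h5 : 5 ≤ n) (H : IsSwitchCut S) :
    MissesShift S ∨ MissesShift (reflect S) := by
  have : NeZero n := ⟨by omega⟩
  by_contra! h
  obtain ⟨hA, hB⟩ := h
  have hout := natCast_notMem_of_not_missesShift_reflect (by omega) hB
  have hlast : ((n - 1 : ℕ) : ZMod n) ∈ S := by
    by_contra hnot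
    exact hA ((missesShift_iff (by omega)).2 ⟨n - 1, by omega, by omega, by omega, hnot⟩)
  by_cases hm2 : 2 ≤ n / 4
  · exact hout (n - 1) (by omega) (by omega) (by omega) hlast
  · have := H.natCast 3 (n - 2) hlast (hout 2 (by omega) le_rfl (by omega)) (by omega)
    omega

theorem not_isSwitchCut (h5 : 5 ≤ n) (hodd : Odd n) (h0 : 0 ∈ S) (h1 : 1 ∉ S)
    (hS : ∃ v ∈ S, v ≠ 0) (hSc : ∃ d ∉ S, d ≠ 1) : ¬IsSwitchCut S := by
  have : NeZero n := ⟨by omega⟩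
  intro H
  have hmiss : ∀ {X : Set (ZMod n)}, IsSwitchCut X → 1 ∉ X → (∃ v ∈ X, v ≠ 0) →
      MissesShift X → MissesShift (reflect X) := fun HX h1X hX hA =>
    HX.missesShift_reflect h5 hodd h1X (HX.notMem_of_missesShift h5 hA).1 hX
  have h1' : (1 : ZMod n) ∉ reflect S := by rwa [mem_reflect, sub_self, not_not]
  have hS' : ∃ v ∈ reflect S, v ≠ 0 := by
    obtain ⟨d, hd, hd1⟩ := hSc
    exact ⟨1 - d, by rwa [mem_reflect, sub_sub_cancel], sub_ne_zero.2 hd1.symm⟩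
  obtain ⟨hA, hA'⟩ : MissesShift S ∧ MissesShift (reflect S) := by
    rcases H.missesShift_or_missesShift_reflect h5 with hA | hA'
    · exact ⟨hA, hmiss H h1 hS hA⟩
    · exact ⟨reflect_reflect S ▸ hmiss (isSwitchCut_reflect H) h1' hS' hA', hA'⟩
  apply (H.notMem_of_missesShift h5 hA).2
  have := ((isSwitchCut_reflect H).notMem_of_missesShift h5 hA').1
  rwa [mem_reflect, not_not, ← ZMod.natCast_self_add_one_sub (by omega),
    show n + 1 - (n - n / 4) = n / 4 + 1 by omega] at this

end circulant

theorem circulant_not_separable (n : ℕ) (hodd : Odd n) (h5 : 5 ≤ n) :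
    ¬ (circulant n).SwitchingSeparable := by
  rintro ⟨W, hW, hWc, U, hU⟩
  have : NeZero n := ⟨by omega⟩
  obtain ⟨x, hx, hx1⟩ := ZMod.exists_mem_add_one_notMem
    (Set.nonempty_of_ncard_ne_zero (s := W) (by omega))
    (Set.nonempty_of_ncard_ne_zero (s := Wᶜ) (by omega))
  obtain ⟨v, hv, hvx⟩ := Set.exists_ne_of_one_lt_ncard hW x
  obtain ⟨d, hd, hdx⟩ := Set.exists_ne_of_one_lt_ncard hWc (x + 1)
  exact circulant.not_isSwitchCut h5 hodd (S := {z | x + z ∈ W}) (by simpa) (by simpa)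
    ⟨v - x, by simpa, sub_ne_zero.2 hvx⟩ ⟨d - x, by simpa, fun h => hdx (eq_add_of_sub_eq' h)⟩
    (circulant.isSwitchCut_of_switch_isolates h5 hU hx hx1)
end

section
/- For odd n ≥ 5, deleting any vertex of the circulant graph G_n (on Z_n with connection set {±1, …, ±⌊n/4⌋}) yields a switching separable graph. Specifically, after deleting v_0, the pair {v_m, v_{−m}} with m = ⌊(n+1)/4⌋ is isolable. -/
/-!
Translate so that the deleted vertex is `0`, and put `k = ⌊n/4⌋`, `m = ⌊(n+1)/4⌋`. The closed
neighbourhoods of `m` and `-m` are the intervals `[m - k, m + k]` and `[-m - k, -m + k]`; since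
`n` is `4k + 1` (and `m = k`) or `4k + 3` (and `m = k + 1`), their union contains every nonzero
vertex and their intersection is at most `{0}`. So every vertex other than `0, ±m` is adjacent
to exactly one of `±m`, and for a pair `{p, q}` with this property, switching at the set of
vertices other than `q` that are not adjacent to `p` cuts every edge between `{p, q}` and the
rest.
-/

theorem ZMod.val_add_eq_or {n : ℕ} [NeZero n] (a b : ZMod n) :
    (a + b).val = a.val + b.val ∨ (a + b).val + n = a.val + b.val := by
  rcases lt_or_ge (a.val + b.val) n with h | h
  · exact Or.inl (ZMod.val_add_of_lt h)
  · exact Or.inr (ZMod.val_add_val_of_le h).symm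

theorem ZMod.val_neg_natCast_of_lt {n m : ℕ} (h0 : 0 < m) (hm : m < n) :
    (-(m : ZMod n)).val = n - m := by
  have : NeZero n := ⟨by omega⟩
  have hval : (m : ZMod n).val = m := ZMod.val_cast_of_lt hm
  have hne : (m : ZMod n) ≠ 0 := fun h => by simp [h] at hval; omega
  rw [ZMod.neg_val, if_neg hne, hval]

theorem SimpleGraph.isolable_pair {V : Type*} [Finite V] (G : SimpleGraph V) {p q : V}
    (hpq : p ≠ q) (hcard : 4 ≤ Nat.card V)
    (hxor : ∀ b, b ≠ p → b ≠ q → (G.Adj p b ↔ ¬ G.Adj q b)) :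
    G.Isolable {p, q} := by
  have hpair : ({p, q} : Set V).ncard = 2 := Set.ncard_pair hpq
  have hcompl := Set.ncard_add_ncard_compl ({p, q} : Set V)
  set U : Set V := {x | x ≠ q ∧ ¬ G.Adj p x}
  have hpU : p ∈ U := ⟨hpq, G.loopless.irrefl p⟩
  have hqU : q ∉ U := fun h => h.1 rfl
  refine ⟨hpair.ge, by omega, U, ?_⟩
  rintro a ha b hb ⟨-, hswitch⟩
  simp only [Set.mem_compl_iff, Set.mem_insert_iff, Set.mem_singleton_iff, not_or] at hb
  have hbU : b ∈ U ↔ ¬ G.Adj p b := and_iff_right hb.2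
  rcases ha with rfl | rfl
  · tauto
  · have := hxor b hb.1 hb.2
    tauto

theorem circulant_adj_iff {n : ℕ} [NeZero n] {a b : ZMod n} :
    (circulant n).Adj a b ↔
      (1 ≤ (b - a).val ∧ (b - a).val ≤ n / 4) ∨ n - n / 4 ≤ (b - a).val := by
  have hn : 0 < n := Nat.pos_of_neZero n
  have hlt : (b - a).val < n := ZMod.val_lt _
  have hval {j : ℕ} (hj : j ≤ n / 4) : (j : ZMod n).val = j :=
    ZMod.val_cast_of_lt (by omega)
  rw [circulant, SimpleGraph.fromRel_adj]
  constructor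
  · rintro ⟨hab, ⟨j, hj1, hjk, rfl⟩ | ⟨j, hj1, hjk, rfl⟩⟩
    · left
      rw [add_sub_cancel_left, hval hjk]
      exact ⟨hj1, hjk⟩
    · right
      rw [sub_add_cancel_left, ZMod.val_neg_natCast_of_lt hj1 (by omega)]
      omega
  · rintro (⟨h1, hk⟩ | hk)
    · refine ⟨fun h => by simp [h] at h1, Or.inl ⟨(b - a).val, h1, hk, ?_⟩⟩
      rw [ZMod.natCast_zmod_val, add_sub_cancel]
    · refine ⟨fun h => by simp [h] at hk; omega, Or.inr ⟨n - (b - a).val, by omega, by omega, ?_⟩⟩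
      rw [Nat.cast_sub hlt.le, ZMod.natCast_self, ZMod.natCast_zmod_val]
      ring

theorem circulant_adj_add_right {n : ℕ} [NeZero n] (a b v : ZMod n) :
    (circulant n).Adj (a + v) (b + v) ↔ (circulant n).Adj a b := by
  simp only [circulant_adj_iff, add_sub_add_right_eq_sub]

theorem circulant_adj_iff_not_adj_neg {n : ℕ} (hodd : Odd n) {y : ZMod n} (hy0 : y ≠ 0)
    (hym : y ≠ (((n + 1) / 4 : ℕ) : ZMod n)) (hym' : y ≠ -(((n + 1) / 4 : ℕ) : ZMod n)) :
    (circulant n).Adj (((n + 1) / 4 : ℕ) : ZMod n) y ↔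
      ¬ (circulant n).Adj (-(((n + 1) / 4 : ℕ) : ZMod n)) y := by
  have hn2 : n % 2 = 1 := Nat.odd_iff.mp hodd
  have : NeZero n := ⟨by omega⟩
  set M : ZMod n := (((n + 1) / 4 : ℕ) : ZMod n)
  have hy := (ZMod.val_injective n).ne hy0
  rw [ZMod.val_zero] at hy
  have hylt := ZMod.val_lt y
  have hMval : M.val = (n + 1) / 4 := ZMod.val_cast_of_lt (by omega)
  have hnegM : (-M).val = n - (n + 1) / 4 := ZMod.val_neg_natCast_of_lt (by omega) (by omega)
  have hym := (ZMod.val_injective n).ne hym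
  have hym' := (ZMod.val_injective n).ne hym'
  have hsub := ZMod.val_add_eq_or y (-M)
  have hadd := ZMod.val_add_eq_or y M
  rw [hMval] at hym hadd
  rw [hnegM] at hym' hsub
  have hsub_lt := ZMod.val_lt (y + -M)
  have hadd_lt := ZMod.val_lt (y + M)
  rw [circulant_adj_iff, circulant_adj_iff, sub_eq_add_neg, sub_neg_eq_add]
  omega

theorem circulant_induce_ne_isolable {n : ℕ} (hodd : Odd n) (h5 : 5 ≤ n) (v : ZMod n) :
    ((circulant n).induce {w | w ≠ v}).Isolable
      {x | (x : ZMod n) = (((n + 1) / 4 : ℕ) : ZMod n) + v ∨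
           (x : ZMod n) = -(((n + 1) / 4 : ℕ) : ZMod n) + v} := by
  have hn2 : n % 2 = 1 := Nat.odd_iff.mp hodd
  have : NeZero n := ⟨by omega⟩
  set M : ZMod n := (((n + 1) / 4 : ℕ) : ZMod n)
  have hMval : M.val = (n + 1) / 4 := ZMod.val_cast_of_lt (by omega)
  have hnegM : (-M).val = n - (n + 1) / 4 := ZMod.val_neg_natCast_of_lt (by omega) (by omega)
  have hM0 : M ≠ 0 := fun h => by simp [h] at hMval; omega
  have hMneg : M ≠ -M := fun h => by
    have := congrArg ZMod.val h
    omega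
  have hp : M + v ≠ v := fun h => hM0 (by simpa using h)
  have hq : -M + v ≠ v := fun h => hM0 (by simpa using h)
  have hW : {x : {w | w ≠ v} | (x : ZMod n) = M + v ∨ (x : ZMod n) = -M + v} =
      {⟨M + v, hp⟩, ⟨-M + v, hq⟩} := by
    ext x
    simp [Subtype.ext_iff]
  rw [hW]
  refine SimpleGraph.isolable_pair _ (by simpa using hMneg) ?_ ?_
  · rw [Nat.card_coe_set_eq, ← Set.compl_singleton_eq, Set.ncard_compl, Set.ncard_singleton,
      Nat.card_zmod]
    omega
  · rintro ⟨b, hbv⟩ hbp hbq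
    simp only [SimpleGraph.comap_adj, Function.Embedding.subtype_apply]
    rw [← sub_add_cancel b v, circulant_adj_add_right, circulant_adj_add_right]
    exact circulant_adj_iff_not_adj_neg hodd (sub_ne_zero.mpr hbv)
      (fun h => hbp (Subtype.ext (eq_add_of_sub_eq h)))
      (fun h => hbq (Subtype.ext (eq_add_of_sub_eq h)))

theorem circulant_delete_vertex_separable (n : ℕ) (hodd : Odd n) (h5 : 5 ≤ n) :
    (∀ v : ZMod n, ((circulant n).induce {w | w ≠ v}).SwitchingSeparable) ∧
      ((circulant n).induce {w : ZMod n | w ≠ 0}).Isolable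
        {x | (x : ZMod n) = (((n + 1) / 4 : ℕ) : ZMod n) ∨
             (x : ZMod n) = -(((n + 1) / 4 : ℕ) : ZMod n)} :=
  ⟨fun v => ⟨_, circulant_induce_ne_isolable hodd h5 v⟩,
    by simpa using circulant_induce_ne_isolable hodd h5 0⟩
end

section
/- In the circulant graph G_n (odd n ≥ 5, connection set {±1,…,±⌊n/4⌋}) with m = ⌊(n+1)/4⌋ and u_i = v_{im}, for every index i the consecutive quadruple satisfies N(u_i, u_{i+1}; u_{i+2}, u_{i+3}) = 1, i.e., exactly one of the pairs {u_i,u_{i+2}}, {u_i,u_{i+3}}, {u_{i+1},u_{i+2}}, {u_{i+1},u_{i+3}} is an edge. -/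
/-!
The vertices `u_i, …, u_{i+3}` form an arithmetic progression with step `m`, so the four pairs
differ by `2m, 3m, m, 2m`, and adjacency only asks whether these differences are `±j (mod n)`
with `1 ≤ j ≤ ⌊n/4⌋`. For `n = 4k + 1` we have `m = k`, a jump, while `2m` and `3m` are not;
for `n = 4k + 3` we have `m = k + 1` and `2m` not jumps, while `3m = n - k` is one.
-/

theorem ZMod.natCast_eq_natCast_iff_of_lt {n a b : ℕ} (ha : a < n) (hb : b < n) :
    (a : ZMod n) = b ↔ a = b := by
  refine ⟨fun h => ?_, congrArg _⟩
  simpa [ZMod.val_natCast_of_lt ha, ZMod.val_natCast_of_lt hb] using congrArg ZMod.val h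

theorem ZMod.natCast_add_eq_zero_iff_of_lt {n a b : ℕ} (ha : a < n) (hb : b < n) :
    (a + b : ZMod n) = 0 ↔ a + b = 0 ∨ a + b = n := by
  rw [← Nat.cast_add, ZMod.natCast_eq_zero_iff]
  constructor
  · rintro ⟨t, ht⟩
    have : t < 2 := by nlinarith
    interval_cases t <;> omega
  · rintro (h | h) <;> simp [h]

/-- For `c < n`: `c ≡ ±j (mod n)` for some `1 ≤ j ≤ n / 4`. -/
def IsCirculantJump (n c : ℕ) : Prop :=
  (0 < c ∧ c ≤ n / 4) ∨ n ≤ c + n / 4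

theorem circulant_adj_add_natCast_iff {n c : ℕ} (hc : c < n) (x : ZMod n) :
    (circulant n).Adj x (x + c) ↔ IsCirculantJump n c := by
  have hc0 : (c : ZMod n) = 0 ↔ c = 0 := by
    rw [ZMod.natCast_eq_zero_iff]
    exact ⟨fun h => Nat.eq_zero_of_dvd_of_lt h hc, by rintro rfl; exact dvd_zero n⟩
  have hjn : ∀ j, j ≤ n / 4 → j < n := fun j hj => by omega
  simp only [circulant, SimpleGraph.fromRel_adj, ne_eq, left_eq_add, add_right_inj,
    add_assoc, IsCirculantJump, hc0]
  constructor
  · rintro ⟨hc_ne, ⟨j, hj1, hj, hcj⟩ | ⟨j, hj1, hj, hcj⟩⟩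
    · rw [ZMod.natCast_eq_natCast_iff_of_lt hc (hjn j hj)] at hcj
      omega
    · rw [ZMod.natCast_add_eq_zero_iff_of_lt hc (hjn j hj)] at hcj
      omega
  · rintro (⟨hc_pos, hcn⟩ | hcn)
    · exact ⟨hc_pos.ne', .inl ⟨c, hc_pos, hcn, rfl⟩⟩
    · refine ⟨by omega, .inr ⟨n - c, by omega, by omega, ?_⟩⟩
      rw [ZMod.natCast_add_eq_zero_iff_of_lt hc (by omega)]
      omega

theorem circulant_N_eq_one_of_isCirculantJump {n d : ℕ} (hd : 3 * d < n) (x : ZMod n)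
    (h2 : ¬ IsCirculantJump n (2 * d)) (h13 : IsCirculantJump n d ↔ ¬ IsCirculantJump n (3 * d)) :
    (circulant n).N x (x + d) (x + (2 * d : ℕ)) (x + (3 * d : ℕ)) = 1 := by
  have hAC := circulant_adj_add_natCast_iff (by omega : 2 * d < n) x
  have hAD := circulant_adj_add_natCast_iff hd x
  have hBC : (circulant n).Adj (x + d) (x + (2 * d : ℕ)) ↔ IsCirculantJump n d := by
    rw [show x + ((2 * d : ℕ) : ZMod n) = x + d + d by push_cast; ring]
    exact circulant_adj_add_natCast_iff (by omega) _
  have hBD : (circulant n).Adj (x + d) (x + (3 * d : ℕ)) ↔ IsCirculantJump n (2 * d) := by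
    rw [show x + ((3 * d : ℕ) : ZMod n) = x + d + (2 * d : ℕ) by push_cast; ring]
    exact circulant_adj_add_natCast_iff (by omega) _
  unfold SimpleGraph.N
  by_cases hd1 : IsCirculantJump n d <;> simp_all

theorem circulant_consecutive_N_eq_one (n : ℕ) (hodd : Odd n) (h5 : 5 ≤ n) (i : ZMod n) :
    (circulant n).N
      (i * (((n + 1) / 4 : ℕ) : ZMod n))
      ((i + 1) * (((n + 1) / 4 : ℕ) : ZMod n))
      ((i + 2) * (((n + 1) / 4 : ℕ) : ZMod n))
      ((i + 3) * (((n + 1) / 4 : ℕ) : ZMod n)) = 1 := by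
  have hn := Nat.odd_iff.mp hodd
  set m := (n + 1) / 4
  rw [show (i + 1) * (m : ZMod n) = i * m + m by ring,
    show (i + 2) * (m : ZMod n) = i * m + ((2 * m : ℕ) : ZMod n) by push_cast; ring,
    show (i + 3) * (m : ZMod n) = i * m + ((3 * m : ℕ) : ZMod n) by push_cast; ring]
  refine circulant_N_eq_one_of_isCirculantJump (by omega) _ ?_ ?_ <;>
    unfold IsCirculantJump <;> omega
end

section
/- The set of graphs of quadratic polynomials representing a fixed quadratic extended Boolean function in n arguments is closed under switching and forms a single switching class. -/
/-!
Two quadratic representations of `f` differ by a polynomial `d` vanishing on the even-weight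
tuples. Evaluating `d` at `0` and at the indicator of `{a, b}` gives `d {a, b} = d {a} + d {b}`,
so the two graphs differ by the switching with respect to `{i | d {i} = 1}`.
Conversely, if `u` is the indicator of `U`, the product `(∑ i, u i * x i) * (∑ j, x j)` vanishes
on the even-weight tuples and, after reducing `x i ^ 2 = x i`, is a quadratic polynomial whose
coefficient at `{a, b}` is `u a + u b`; adding it to a representation switches its graph by `U`.
-/

section Multilinear

variable {k : ℕ}

lemma mleval_add (c d : Finset (Fin k) → ZMod 2) (x : Fin k → ZMod 2) :
    mleval (c + d) x = mleval c x + mleval d x := by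
  simp only [mleval, Pi.add_apply, add_mul, Finset.sum_add_distrib]

lemma mleval_sub (c d : Finset (Fin k) → ZMod 2) (x : Fin k → ZMod 2) :
    mleval (c - d) x = mleval c x - mleval d x := by
  simp only [mleval, Pi.sub_apply, sub_mul, Finset.sum_sub_distrib]

lemma mldegLE.add {c d : Finset (Fin k) → ZMod 2} {m : ℕ} (hc : mldegLE c m)
    (hd : mldegLE d m) :
    mldegLE (c + d) m := by
  intro s hs
  by_cases hcs : c s = 0
  · exact hd s (by simpa [hcs] using hs)
  · exact hc s hcs

lemma mleval_indicator (c : Finset (Fin k) → ZMod 2) (T : Finset (Fin k)) :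
    mleval c (fun i => if i ∈ T then 1 else 0) = ∑ s ∈ T.powerset, c s := by
  simp only [mleval, Finset.prod_boole, ← Finset.subset_iff, mul_ite, mul_one, mul_zero,
    ← Finset.sum_filter, Finset.filter_subset_univ]

lemma coeff_pair_of_mleval_eq_zero {d : Finset (Fin k) → ZMod 2}
    (hd : ∀ x : Fin k → ZMod 2, (∑ i, x i) = 0 → mleval d x = 0) {a b : Fin k}
    (hab : a ≠ b) :
    d {a, b} = d {a} + d {b} := by
  have h0 := hd (fun i => if i ∈ (∅ : Finset (Fin k)) then 1 else 0) (by simp)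
  have h2 := hd (fun i => if i ∈ ({a, b} : Finset (Fin k)) then 1 else 0) (by
    rw [Finset.sum_boole, Finset.filter_mem_eq_inter, Finset.univ_inter, Finset.card_pair hab]; rfl)
  rw [mleval_indicator, Finset.powerset_empty, Finset.sum_singleton] at h0
  have hpow : ({b} : Finset (Fin k)).powerset = {∅, {b}} := by
    ext; simp [Finset.subset_singleton_iff]
  rw [mleval_indicator, Finset.sum_powerset_insert (by simpa using hab), hpow,
    Finset.sum_pair (Finset.empty_ne_singleton b), Finset.sum_pair (Finset.empty_ne_singleton b),
    h0] at h2
  simp only [Finset.insert_empty] at h2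
  have two : (2 : ZMod 2) = 0 := rfl
  linear_combination h2 - (d {a} + d {b}) * two

end Multilinear

section SwitchingPoly

variable {k : ℕ}

/-- The multilinear reduction of `(∑ i, u i * x i) * (∑ j, x j)`: the monomial `x i * x j`
contributes to the coefficient of `{i, j}`, which is `{i}` when `i = j` since `x i ^ 2 = x i`. -/
def switchingPoly (u : Fin k → ZMod 2) (s : Finset (Fin k)) : ZMod 2 :=
  ∑ i, ∑ j, if s = {i, j} then u i else 0

lemma prod_pair_eq_mul (x : Fin k → ZMod 2) (i j : Fin k) :
    ∏ t ∈ ({i, j} : Finset (Fin k)), x t = x i * x j := by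
  rcases eq_or_ne i j with rfl | hij
  · simp [← sq, ZMod.pow_card]
  · exact Finset.prod_pair hij

lemma mleval_switchingPoly (u x : Fin k → ZMod 2) :
    mleval (switchingPoly u) x = (∑ i, u i * x i) * ∑ j, x j := by
  simp only [mleval, switchingPoly, Finset.sum_mul, ite_mul, zero_mul]
  rw [Finset.sum_comm]
  simp only [Finset.sum_comm (γ := Finset (Fin k)), Finset.sum_ite_eq', Finset.mem_univ, if_true,
    prod_pair_eq_mul, mul_assoc, Finset.mul_sum]

lemma switchingPoly_pair (u : Fin k → ZMod 2) {a b : Fin k} (hab : a ≠ b) :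
    switchingPoly u {a, b} = u a + u b := by
  have key : ∀ i j : Fin k,
      ({a, b} : Finset (Fin k)) = {i, j} ↔ a = i ∧ b = j ∨ a = j ∧ b = i := by
    intro i j
    rw [← Finset.coe_inj, Finset.coe_pair, Finset.coe_pair, Set.pair_eq_pair_iff]
  have split : ∀ i j : Fin k, (if a = i ∧ b = j ∨ a = j ∧ b = i then u i else 0) =
      (if b = j ∧ a = i then u i else 0) + (if a = j ∧ b = i then u i else 0) := by
    intro i j
    by_cases h₁ : a = i ∧ b = j
    · have h₂ : ¬(a = j ∧ b = i) := fun h₂ => hab (h₁.1.trans h₂.2.symm)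
      rw [if_pos (Or.inl h₁), if_pos h₁.symm, if_neg h₂, add_zero]
    · simp [h₁, and_comm]
  simp only [switchingPoly, key, split, Finset.sum_add_distrib, ite_and, Finset.sum_ite_eq,
    Finset.mem_univ, if_true]

lemma mldegLE_switchingPoly (u : Fin k → ZMod 2) : mldegLE (switchingPoly u) 2 := by
  intro s hs
  obtain ⟨i, j, hij⟩ : ∃ i j, s = {i, j} := by
    by_contra! h
    exact hs (Finset.sum_eq_zero fun i _ => Finset.sum_eq_zero fun j _ => if_neg (h i j))
  exact hij ▸ Finset.card_le_two

end SwitchingPoly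

lemma graphOf_eq_switch {k : ℕ} {c c' : Finset (Fin k) → ZMod 2} (u : Fin k → ZMod 2)
    (h : ∀ a b, a ≠ b → c' {a, b} = c {a, b} + u a + u b) :
    graphOf c' = (graphOf c).switch {i | u i = 1} := by
  ext a b
  simp only [graphOf, SimpleGraph.switch, Set.mem_ofPred_eq]
  rcases eq_or_ne a b with rfl | hab
  · simp
  · simp only [ne_eq, hab, not_false_eq_true, true_and, h a b hab]
    generalize c {a, b} = x, u a = y, u b = z
    revert x y z
    decide

theorem graphs_of_representations_form_switching_class (n : ℕ)
    (f : (Fin n → ZMod 2) → ZMod 2) :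
    (∀ p : Finset (Fin n) → ZMod 2, mldegLE p 2 → Represents p f →
      ∀ U : Set (Fin n), ∃ p' : Finset (Fin n) → ZMod 2,
        mldegLE p' 2 ∧ Represents p' f ∧ graphOf p' = (graphOf p).switch U) ∧
    (∀ p p' : Finset (Fin n) → ZMod 2, mldegLE p 2 → Represents p f →
      mldegLE p' 2 → Represents p' f →
        ∃ U : Set (Fin n), graphOf p' = (graphOf p).switch U) := by
  classical
  constructor
  · intro p hp hpf U
    let u : Fin n → ZMod 2 := fun i => if i ∈ U then 1 else 0
    have hU : {i | u i = 1} = U := by ext i; by_cases hi : i ∈ U <;> simp [u, hi]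
    refine ⟨p + switchingPoly u, hp.add (mldegLE_switchingPoly u), fun x hx => ?_, ?_⟩
    · rw [mleval_add, mleval_switchingPoly, hx, mul_zero, add_zero, hpf x hx]
    · rw [← hU]
      exact graphOf_eq_switch u fun a b hab => by
        rw [Pi.add_apply, switchingPoly_pair u hab, add_assoc]
  · intro p p' _ hpf _ hp'f
    have hvanish : ∀ x : Fin n → ZMod 2, (∑ i, x i) = 0 → mleval (p' - p) x = 0 :=
      fun x hx => by rw [mleval_sub, hpf x hx, hp'f x hx, sub_self]
    refine ⟨_, graphOf_eq_switch (fun i => (p' - p) {i}) fun a b hab => ?_⟩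
    rw [add_assoc, ← coeff_pair_of_mleval_eq_zero hvanish hab, Pi.sub_apply, add_sub_cancel]
end

section
/- A quadratic extended Boolean function f in n ≥ 4 arguments is separable if and only if the graph of any quadratic polynomial representing f is switching separable. -/
/-!
Evaluating `f` at the even vectors `e_a + e_b`, the linear terms of a representing polynomial
cancel in pairs, so for `a, a'` on one side and `b, b'` on the other the sum of `f` over
`e_a + e_b`, `e_a + e_b'`, `e_a' + e_b`, `e_a' + e_b'` is the 4-cycle sum
`c{a,b} + c{a,b'} + c{a',b} + c{a',b'}`. If `f = g + h` with `g` depending only on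
`A ⊆ W` and `h` only on `B ⊆ Wᶜ`, this sum vanishes for `g` and for `h`. Vanishing 4-cycle sums
across `(W, Wᶜ)` mean `c{a,b} = r a + r b` there, and switching at `{r = 1}` then deletes every
edge between `W` and `Wᶜ`.

Conversely, if `c{a,b} = r a + r b` across `(A, Aᶜ)`, the mixed part of a quadratic `c` is
`(∑_A r x)(∑_{Aᶜ} x) + (∑_A x)(∑_{Aᶜ} r x)`; on even vectors `∑_{Aᶜ} x = ∑_A x`, so it splits
into a function of `x|A` plus a function of `x|Aᶜ`.
-/

open Finset

section CharVec

variable {k : ℕ}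

def charVec (T : Finset (Fin k)) : Fin k → ZMod 2 := fun i => if i ∈ T then 1 else 0

lemma sum_charVec (T : Finset (Fin k)) : ∑ i, charVec T i = #T := by
  simp [charVec]

lemma sum_charVec_pair {a b : Fin k} (hab : a ≠ b) : ∑ i, charVec {a, b} i = 0 := by
  rw [sum_charVec, card_pair hab]
  rfl

lemma mleval_charVec (c : Finset (Fin k) → ZMod 2) (T : Finset (Fin k)) :
    mleval c (charVec T) = ∑ s ∈ T.powerset, c s := by
  rw [← filter_subset_univ, sum_filter]
  simp [mleval, charVec, prod_boole, subset_iff]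

end CharVec

section CrossDiff

variable {k : ℕ} {c : Finset (Fin k) → ZMod 2} {f : (Fin k → ZMod 2) → ZMod 2}

lemma Represents.apply_charVec_pair (hrep : Represents c f) {a b : Fin k} (hab : a ≠ b) :
    f (charVec {a, b}) = c ∅ + c {a} + c {b} + c {a, b} := by
  rw [← hrep _ (sum_charVec_pair hab), mleval_charVec, sum_powerset_insert (by simpa using hab)]
  have hpow : ({b} : Finset (Fin k)).powerset = {∅, {b}} := by ext; simp [subset_singleton_iff]
  have hne : ∅ ≠ ({b} : Finset (Fin k)) := (singleton_nonempty b).ne_empty.symm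
  rw [hpow, sum_pair hne, sum_pair hne]
  simp only [insert_empty_eq]
  ring

def crossDiff (φ : (Fin k → ZMod 2) → ZMod 2) (a a' b b' : Fin k) : ZMod 2 :=
  φ (charVec {a, b}) + φ (charVec {a, b'}) + φ (charVec {a', b}) + φ (charVec {a', b'})

lemma Represents.crossDiff_eq (hrep : Represents c f) {a a' b b' : Fin k} (hab : a ≠ b)
    (hab' : a ≠ b') (ha'b : a' ≠ b) (ha'b' : a' ≠ b') :
    crossDiff f a a' b b' = c {a, b} + c {a, b'} + c {a', b} + c {a', b'} := by
  simp only [crossDiff, hrep.apply_charVec_pair, hab, hab', ha'b, ha'b', ne_eq, not_false_eq_true]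
  ring_nf
  reduce_mod_char

variable {φ : (Fin k → ZMod 2) → ZMod 2} {S : Set (Fin k)}

lemma DependsOn.crossDiff_eq_zero_of_right (hφ : DependsOn φ S) {b b' : Fin k} (hb : b ∉ S)
    (hb' : b' ∉ S) (a a' : Fin k) : crossDiff φ a a' b b' = 0 := by
  have key (u : Fin k) : φ (charVec {u, b}) = φ (charVec {u, b'}) := hφ fun i hi => by
    have : i ≠ b := ne_of_mem_of_not_mem hi hb
    have : i ≠ b' := ne_of_mem_of_not_mem hi hb'
    simp [charVec, *]
  rw [crossDiff, key a, key a']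
  ring_nf
  reduce_mod_char

lemma DependsOn.crossDiff_eq_zero_of_left (hφ : DependsOn φ S) {a a' : Fin k} (ha : a ∉ S)
    (ha' : a' ∉ S) (b b' : Fin k) : crossDiff φ a a' b b' = 0 := by
  have key (u : Fin k) : φ (charVec {a, u}) = φ (charVec {a', u}) := hφ fun i hi => by
    have : i ≠ a := ne_of_mem_of_not_mem hi ha
    have : i ≠ a' := ne_of_mem_of_not_mem hi ha'
    simp [charVec, *]
  rw [crossDiff, key b, key b']
  ring_nf
  reduce_mod_char

end CrossDiff

lemma exists_potential_of_four_cycle {α : Type*} {W : Set α} (q : α → α → ZMod 2) {a₀ b₀ : α}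
    (ha₀ : a₀ ∈ W) (hb₀ : b₀ ∉ W)
    (hq : ∀ a ∈ W, ∀ a' ∈ W, ∀ b ∉ W, ∀ b' ∉ W, q a b + q a b' + q a' b + q a' b' = 0) :
    ∃ r : α → ZMod 2, ∀ a ∈ W, ∀ b ∉ W, q a b = r a + r b := by
  classical
  refine ⟨fun i => if i ∈ W then q i b₀ + q a₀ b₀ else q a₀ i, fun a ha b hb => ?_⟩
  simp only [ha, hb, if_true, if_false]
  linear_combination (norm := ring_nf) hq a ha a₀ ha₀ b hb b₀ hb₀
  reduce_mod_char

section Graph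

variable {k : ℕ} (c : Finset (Fin k) → ZMod 2)

lemma graphOf_switch_adj_iff (U : Set (Fin k)) {a b : Fin k} (hab : a ≠ b) :
    ((graphOf c).switch U).Adj a b ↔ c {a, b} ≠ U.indicator 1 a + U.indicator 1 b := by
  classical
  simp only [SimpleGraph.switch, graphOf, Set.indicator_apply, ne_eq, hab, not_false_eq_true,
    true_and, Pi.one_apply]
  generalize c {a, b} = z
  by_cases ha : a ∈ U <;> by_cases hb : b ∈ U <;> simp only [ha, hb] <;> revert z <;> decide

lemma indicator_setOf_eq_one {α : Type*} (r : α → ZMod 2) : {i | r i = 1}.indicator 1 = r := by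
  classical
  funext i
  simp only [Set.indicator_apply, Set.mem_ofPred_eq, Pi.one_apply]
  generalize r i = z
  revert z
  decide

lemma isolable_coe_graphOf_iff (W : Finset (Fin k)) :
    (graphOf c).Isolable ↑W ↔
      2 ≤ #W ∧ 2 ≤ #Wᶜ ∧ ∃ r : Fin k → ZMod 2, ∀ a ∈ W, ∀ b ∉ W, c {a, b} = r a + r b := by
  have hne {a b : Fin k} (ha : a ∈ W) (hb : b ∉ W) : a ≠ b := ne_of_mem_of_not_mem ha hb
  simp only [SimpleGraph.Isolable, Set.ncard_coe_finset, ← coe_compl, mem_coe, mem_compl]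
  refine and_congr_right fun _ => and_congr_right fun _ => ⟨?_, ?_⟩
  · rintro ⟨U, hU⟩
    refine ⟨U.indicator 1, fun a ha b hb => ?_⟩
    simpa [graphOf_switch_adj_iff c U (hne ha hb)] using hU a ha b hb
  · rintro ⟨r, hr⟩
    refine ⟨{i | r i = 1}, fun a ha b hb => ?_⟩
    simpa [graphOf_switch_adj_iff c _ (hne ha hb), indicator_setOf_eq_one] using hr a ha b hb

lemma switchingSeparable_graphOf_iff :
    (graphOf c).SwitchingSeparable ↔ ∃ W : Finset (Fin k),
      2 ≤ #W ∧ 2 ≤ #Wᶜ ∧ ∃ r : Fin k → ZMod 2, ∀ a ∈ W, ∀ b ∉ W, c {a, b} = r a + r b := by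
  refine ⟨fun ⟨W, hW⟩ => ?_, fun ⟨W, hW⟩ => ⟨W, (isolable_coe_graphOf_iff c W).2 hW⟩⟩
  lift W to Finset (Fin k) using W.toFinite
  exact ⟨W, (isolable_coe_graphOf_iff c W).1 hW⟩

end Graph

section Split

variable {k : ℕ} {c : Finset (Fin k) → ZMod 2}

lemma sum_sdiff_powerset_union_eq_sum_pairs (hc : mldegLE c 2) (A : Finset (Fin k))
    (x : Fin k → ZMod 2) :
    ∑ s ∈ univ \ (A.powerset ∪ Aᶜ.powerset), c s * ∏ i ∈ s, x i =
      ∑ a ∈ A, ∑ b ∈ Aᶜ, c {a, b} * (x a * x b) := by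
  have hne {ab : Fin k × Fin k} (h : ab ∈ A ×ˢ Aᶜ) : ab.1 ≠ ab.2 :=
    ne_of_mem_of_not_mem (mem_product.1 h).1 (mem_compl.1 (mem_product.1 h).2)
  have hinj : Set.InjOn (fun ab : Fin k × Fin k => ({ab.1, ab.2} : Finset (Fin k)))
      ↑(A ×ˢ Aᶜ) := by
    rintro ⟨a, b⟩ hab ⟨a', b'⟩ hab' h
    simp only at h
    simp only [coe_product, coe_compl, Set.mem_prod, mem_coe, Set.mem_compl_iff] at hab hab'
    have ha : a ∈ ({a', b'} : Finset (Fin k)) := h ▸ mem_insert_self a {b}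
    have hb : b ∈ ({a', b'} : Finset (Fin k)) := h ▸ mem_insert_of_mem (mem_singleton_self b)
    simp only [mem_insert, mem_singleton] at ha hb
    have : a ≠ b' := ne_of_mem_of_not_mem hab.1 hab'.2
    have : b ≠ a' := (ne_of_mem_of_not_mem hab'.1 hab.2).symm
    simp_all
  have hzero (s) (hs : s ∈ univ \ (A.powerset ∪ Aᶜ.powerset))
      (himg : s ∉ (A ×ˢ Aᶜ).image fun ab => ({ab.1, ab.2} : Finset (Fin k))) :
      c s * ∏ i ∈ s, x i = 0 := by
    by_contra hs0
    simp only [mem_sdiff, mem_univ, mem_union, mem_powerset, not_or, true_and,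
      not_subset, mem_compl, not_not] at hs
    obtain ⟨⟨b, hbs, hb⟩, ⟨a, has, ha⟩⟩ := hs
    have hab : a ≠ b := ne_of_mem_of_not_mem ha hb
    have hsub : {a, b} ⊆ s := insert_subset has (singleton_subset_iff.2 hbs)
    have hcard : #s ≤ #{a, b} := (card_pair hab).symm ▸ hc s (left_ne_zero_of_mul hs0)
    exact himg (mem_image.2 ⟨(a, b), mem_product.2 ⟨ha, mem_compl.2 hb⟩,
      eq_of_subset_of_card_le hsub hcard⟩)
  have himage : ((A ×ˢ Aᶜ).image fun ab => ({ab.1, ab.2} : Finset (Fin k))) ⊆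
      univ \ (A.powerset ∪ Aᶜ.powerset) := by
    intro s hs
    obtain ⟨⟨a, b⟩, hab, rfl⟩ := mem_image.1 hs
    simp only [mem_product, mem_compl] at hab
    simp [insert_subset_iff, hab.1, hab.2]
  calc ∑ s ∈ univ \ (A.powerset ∪ Aᶜ.powerset), c s * ∏ i ∈ s, x i
      = ∑ s ∈ (A ×ˢ Aᶜ).image (fun ab => ({ab.1, ab.2} : Finset (Fin k))),
          c s * ∏ i ∈ s, x i := (sum_subset himage hzero).symm
    _ = ∑ ab ∈ A ×ˢ Aᶜ, c {ab.1, ab.2} * (x ab.1 * x ab.2) := by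
      rw [sum_image hinj]
      exact sum_congr rfl fun ab h => by rw [prod_pair (hne h)]
    _ = ∑ a ∈ A, ∑ b ∈ Aᶜ, c {a, b} * (x a * x b) := sum_product _ _ _

lemma mleval_add_apply_empty (hc : mldegLE c 2) (A : Finset (Fin k)) (x : Fin k → ZMod 2) :
    mleval c x + c ∅ = ∑ s ∈ A.powerset, c s * ∏ i ∈ s, x i +
      ∑ s ∈ Aᶜ.powerset, c s * ∏ i ∈ s, x i + ∑ a ∈ A, ∑ b ∈ Aᶜ, c {a, b} * (x a * x b) := by
  have hinter : A.powerset ∩ Aᶜ.powerset = {∅} := by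
    ext s
    simp [← subset_inter_iff]
  rw [mleval, ← sum_sdiff (subset_univ (A.powerset ∪ Aᶜ.powerset)),
    sum_sdiff_powerset_union_eq_sum_pairs hc, ← sum_union_inter, hinter, sum_singleton,
    prod_empty, mul_one]
  ring

end Split

section Separable

variable {k : ℕ} {c : Finset (Fin k) → ZMod 2} {f : (Fin k → ZMod 2) → ZMod 2}

/-- The monomials of `c` inside `S`, plus the half of the mixed part that the identity
`∑_{Sᶜ} x = ∑_S x` on even vectors lets us move onto `S`. -/
def restrictPart (c : Finset (Fin k) → ZMod 2) (r : Fin k → ZMod 2) (S : Finset (Fin k))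
    (x : Fin k → ZMod 2) : ZMod 2 :=
  ∑ s ∈ S.powerset, c s * ∏ i ∈ s, x i + (∑ i ∈ S, r i * x i) * ∑ i ∈ S, x i

lemma dependsOn_restrictPart (r : Fin k → ZMod 2) (S : Finset (Fin k)) :
    DependsOn (restrictPart c r S) ↑S := fun x y hxy => by
  have hsum (F : Fin k → ZMod 2 → ZMod 2) : ∑ i ∈ S, F i (x i) = ∑ i ∈ S, F i (y i) :=
    sum_congr rfl fun i hi => by rw [hxy i hi]
  have hmono : ∑ s ∈ S.powerset, c s * ∏ i ∈ s, x i = ∑ s ∈ S.powerset, c s * ∏ i ∈ s, y i :=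
    sum_congr rfl fun s hs => by
      rw [prod_congr rfl fun i hi => hxy i (mem_powerset.1 hs hi)]
  simp only [restrictPart, hmono, hsum fun i z => r i * z, hsum fun _ z => z]

lemma ebfSeparable_of_potential (hc : mldegLE c 2) (hrep : Represents c f) {A : Finset (Fin k)}
    (hA : #A ≤ k - 2) (hAc : #Aᶜ ≤ k - 2) {r : Fin k → ZMod 2}
    (hr : ∀ a ∈ A, ∀ b ∉ A, c {a, b} = r a + r b) : EbfSeparable f := by
  refine ⟨A, Aᶜ, disjoint_compl_right, hA, hAc, restrictPart c r A,
    fun x => restrictPart c r Aᶜ x + c ∅, dependsOn_restrictPart r A,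
    fun x y hxy => congrArg (· + c ∅) (dependsOn_restrictPart r Aᶜ hxy), fun x hx => ?_⟩
  have hcross : ∑ a ∈ A, ∑ b ∈ Aᶜ, c {a, b} * (x a * x b) =
      (∑ i ∈ A, r i * x i) * ∑ i ∈ Aᶜ, x i + (∑ i ∈ A, x i) * ∑ i ∈ Aᶜ, r i * x i := by
    rw [sum_mul_sum, sum_mul_sum, ← sum_add_distrib]
    refine sum_congr rfl fun a ha => ?_
    rw [← sum_add_distrib]
    refine sum_congr rfl fun b hb => ?_
    rw [hr a ha b (mem_compl.1 hb)]
    ring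
  have hweight : ∑ i ∈ Aᶜ, x i = ∑ i ∈ A, x i := by
    rw [← sum_add_sum_compl A x] at hx
    linear_combination (norm := ring_nf) hx
    reduce_mod_char
  have hsplit := mleval_add_apply_empty hc A x
  rw [hcross] at hsplit
  rw [← hrep x hx]
  simp only [restrictPart]
  linear_combination (norm := ring_nf) hsplit + (∑ i ∈ A, r i * x i + ∑ i ∈ Aᶜ, r i * x i) * hweight
  reduce_mod_char

lemma exists_potential_of_decomposition (hrep : Represents c f) {A B W : Finset (Fin k)}
    (hAW : A ⊆ W) (hWB : W ⊆ Bᶜ) (hW : W.Nonempty) (hWc : Wᶜ.Nonempty)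
    {g h : (Fin k → ZMod 2) → ZMod 2} (hg : DependsOn g ↑A) (hh : DependsOn h ↑B)
    (hfgh : ∀ x : Fin k → ZMod 2, ∑ i, x i = 0 → f x = g x + h x) :
    ∃ r : Fin k → ZMod 2, ∀ a ∈ W, ∀ b ∉ W, c {a, b} = r a + r b := by
  obtain ⟨a₀, ha₀⟩ := hW
  obtain ⟨b₀, hb₀⟩ := hWc
  refine exists_potential_of_four_cycle (W := (W : Set (Fin k))) _ ha₀ (mem_compl.1 hb₀)
    fun a ha a' ha' b hb b' hb' => ?_
  have hne {u v : Fin k} (hu : u ∈ W) (hv : v ∉ W) : u ≠ v := ne_of_mem_of_not_mem hu hv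
  have hnotB {u : Fin k} (hu : u ∈ W) : u ∉ (↑B : Set (Fin k)) := mem_compl.1 (hWB hu)
  have hnotA {v : Fin k} (hv : v ∉ W) : v ∉ (↑A : Set (Fin k)) := fun hvA => hv (hAW hvA)
  calc c {a, b} + c {a, b'} + c {a', b} + c {a', b'}
      = crossDiff f a a' b b' :=
        (hrep.crossDiff_eq (hne ha hb) (hne ha hb') (hne ha' hb) (hne ha' hb')).symm
    _ = crossDiff g a a' b b' + crossDiff h a a' b b' := by
        simp only [crossDiff, hfgh _ (sum_charVec_pair (hne ha hb)),
          hfgh _ (sum_charVec_pair (hne ha hb')), hfgh _ (sum_charVec_pair (hne ha' hb)),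
          hfgh _ (sum_charVec_pair (hne ha' hb'))]
        ring
    _ = 0 := by
        rw [hg.crossDiff_eq_zero_of_right (hnotA hb) (hnotA hb'),
          hh.crossDiff_eq_zero_of_left (hnotB ha) (hnotB ha'), add_zero]

end Separable

lemma exists_superset_subset_compl_two_le_card {α : Type*} [Fintype α] [DecidableEq α]
    (hα : 4 ≤ Fintype.card α) {A B : Finset α} (hAB : Disjoint A B)
    (hA : #A ≤ Fintype.card α - 2) (hB : #B ≤ Fintype.card α - 2) :
    ∃ W, A ⊆ W ∧ W ⊆ Bᶜ ∧ 2 ≤ #W ∧ 2 ≤ #Wᶜ := by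
  have hcard : #A + #B ≤ Fintype.card α := card_union_of_disjoint hAB ▸ card_le_univ _
  obtain ⟨W, hAW, hWB, hW⟩ := exists_subsuperset_card_eq (n := max #A 2)
    (subset_compl_iff_disjoint_right.2 hAB) (le_max_left _ _) (by rw [card_compl]; omega)
  exact ⟨W, hAW, hWB, by omega, by rw [card_compl]; omega⟩

theorem ebf_separable_iff_graph_separable (n : ℕ) (h4 : 4 ≤ n)
    (f : (Fin n → ZMod 2) → ZMod 2) (p : Finset (Fin n) → ZMod 2)
    (hp : mldegLE p 2) (hrep : Represents p f) :
    EbfSeparable f ↔ (graphOf p).SwitchingSeparable := by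
  rw [switchingSeparable_graphOf_iff]
  constructor
  · rintro ⟨A, B, hAB, hA, hB, g, h, hg, hh, hfgh⟩
    obtain ⟨W, hAW, hWB, hW, hWc⟩ :=
      exists_superset_subset_compl_two_le_card (by simpa) hAB (by simpa) (by simpa)
    exact ⟨W, hW, hWc, exists_potential_of_decomposition hrep hAW hWB (card_pos.1 (by omega))
      (card_pos.1 (by omega)) hg hh hfgh⟩
  · rintro ⟨W, hW, hWc, r, hr⟩
    have hsum : #W + #Wᶜ = n := by simp
    exact ebfSeparable_of_potential hp hrep (by omega) (by omega) hr
end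

section
/- Let λ be an extended Boolean function in n+1 arguments and let Q_λ be the n-ary operation on Σ = {0,1}² defined by the predicate: Q_λ⟨[x_0,y_0],…,[x_n,y_n]⟩ holds iff x_0+⋯+x_n = 0 and y_0+⋯+y_n = λ(x_0,…,x_n) (mod 2). Then Q_λ is an n-ary quasigroup of order 4: fixing any n of the n+1 coordinates uniquely determines the remaining one. -/
/-! Fixing all entries but the `k`-th, the first condition forces the first coordinate of the
missing entry. This determines the whole first row, hence the value of `λ`, and the second
condition then forces the second coordinate. Only the additive group structure of `ZMod 2`
is involved, so any pair of abelian groups will do. -/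

open Finset Function

section Wreath

variable {ι G H : Type*} [Fintype ι] [DecidableEq ι] [AddCommGroup G] [AddCommGroup H]

/-- The predicate `Q_λ` of the paper, with the entry `[x_i, y_i]` stored as `x i : G × H`. -/
def IsWreathTuple (f : (ι → G) → H) (x : ι → G × H) : Prop :=
  ∑ i, (x i).1 = 0 ∧ ∑ i, (x i).2 = f (fun i => (x i).1)

theorem sum_update_eq_add_sum_erase {M : Type*} [AddCommMonoid M] (z : ι → M) (k : ι) (a : M) :
    ∑ i, update z k a i = a + ∑ i ∈ univ.erase k, z i := by
  rw [sum_update_of_mem (mem_univ k), sdiff_singleton_eq_erase]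

theorem isWreathTuple_update_iff (f : (ι → G) → H) (k : ι) (z : ι → G × H) (a : G × H) :
    IsWreathTuple f (update z k a) ↔
      a = (-(∑ i ∈ univ.erase k, z i).1,
        f (update (Prod.fst ∘ z) k (-(∑ i ∈ univ.erase k, z i).1)) -
          (∑ i ∈ univ.erase k, z i).2) := by
  set s := ∑ i ∈ univ.erase k, z i
  have hsum : ∑ i, update z k a i = a + s := sum_update_eq_add_sum_erase z k a
  have hfst : (fun i => (update z k a i).1) = update (Prod.fst ∘ z) k a.1 :=
    comp_update Prod.fst z k a
  have hsum_fst : ∑ i, (update z k a i).1 = a.1 + s.1 := by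
    rw [← Prod.fst_sum, hsum, Prod.fst_add]
  have hsum_snd : ∑ i, (update z k a i).2 = a.2 + s.2 := by
    rw [← Prod.snd_sum, hsum, Prod.snd_add]
  rw [IsWreathTuple, hsum_fst, hsum_snd, hfst, add_eq_zero_iff_eq_neg, Prod.ext_iff,
    ← eq_sub_iff_add_eq]
  exact and_congr_right fun h₁ => by rw [h₁]

theorem existsUnique_isWreathTuple_update (f : (ι → G) → H) (k : ι) (z : ι → G × H) :
    ∃! a : G × H, IsWreathTuple f (update z k a) := by
  simp only [isWreathTuple_update_iff]
  exact existsUnique_eq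

end Wreath

theorem wreath_is_quasigroup (n : ℕ) (lam : (Fin (n + 1) → ZMod 2) → ZMod 2)
    (k : Fin (n + 1)) (z : Fin (n + 1) → ZMod 2 × ZMod 2) :
    ∃! a : ZMod 2 × ZMod 2,
      (∑ i, (Function.update z k a i).1) = 0 ∧
      (∑ i, (Function.update z k a i).2) = lam (fun i => (Function.update z k a i).1) := by
  exact existsUnique_isWreathTuple_update lam k z
end
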